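/- arXiv:2307.13780 — 8 statements merged into one kernel-verified Lean document; each statement's English description precedes it below -/
import Mathlib

section
/- Let S be a nondegenerate n-dimensional simplex in R^n with basic Lagrange polynomials λ_1,...,λ_{n+1} (the affine functions with λ_j(v_k) = δ_{jk} at the vertices v_k of S), and let Ω ⊂ R^n be a compact set with Ω ⊄ S. Then the absorption coefficient ξ(Ω;S) := min{σ ≥ 1 : Ω ⊂ σS} (where σS denotes the homothety of S with ratio σ about its centroid) satisfies ξ(Ω;S) = (n+1)·max_{1≤k≤n+1} max_{x∈Ω} (−λ_k(x)) + 1. -/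
/-- The (solid) simplex with vertices `v`. -/
noncomputable def simplexHull {n : ℕ} (v : Fin (n+1) → (Fin n → ℝ)) : Set (Fin n → ℝ) :=
  convexHull ℝ (Set.range v)

/-- The homothetic copy `σS` of the simplex with vertices `v`, with ratio `σ`
about the centroid. -/
noncomputable def scaledSimplex {n : ℕ} (v : Fin (n+1) → (Fin n → ℝ)) (σ : ℝ) :
    Set (Fin n → ℝ) :=
  AffineMap.homothety (Finset.univ.centroid ℝ v) σ '' simplexHull v

/-- The absorption coefficient `ξ(Ω; S)` of `Ω` by the simplex with vertices `v`. -/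
noncomputable def absCoef {n : ℕ} (Ω : Set (Fin n → ℝ)) (v : Fin (n+1) → (Fin n → ℝ)) : ℝ :=
  sInf {σ : ℝ | 1 ≤ σ ∧ Ω ⊆ scaledSimplex v σ}

/-!
In barycentric coordinates `λ_k` the homothety of ratio `σ` about the centroid `c` acts by
`λ_k ↦ σ (λ_k - 1/(n+1)) + 1/(n+1)`, because `λ_k(c) = 1/(n+1)`. Hence `x ∈ σS` iff
`-λ_k(x) ≤ (σ - 1)/(n+1)` for all `k`, and `Ω ⊆ σS` iff `σ ≥ (n+1) M + 1`, where `M` is the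
maximum of `-λ_k` over `Ω`. Since `Ω ⊄ S`, `M > 0`, so this threshold is at least `1`.
-/

open AffineMap

section AffineSpace

variable {ι k V P : Type*} [AddCommGroup V] [AddTorsor V P]

theorem AffineBasis.eq_coord_of_apply_eq_ite [Ring k] [Module k V] [DecidableEq ι]
    (b : AffineBasis ι k P) {j : ι} {f : P →ᵃ[k] k}
    (hf : ∀ i, f (b i) = if j = i then 1 else 0) : f = b.coord j :=
  AffineMap.ext_on b.tot <| by
    rintro - ⟨i, rfl⟩
    rw [hf, b.coord_apply]

theorem AffineMap.apply_homothety [CommRing k] [Module k V] (f : P →ᵃ[k] k) (c p : P) (r : k) :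
    f (homothety c r p) = r * (f p - f c) + f c := by
  rw [homothety_eq_lineMap, apply_lineMap, lineMap_apply_ring']

theorem AffineMap.mem_homothety_image_iff [Field k] [Module k V] {s : Set P} {c p : P} {r : k}
    (hr : r ≠ 0) :
    p ∈ homothety c r '' s ↔ homothety c r⁻¹ p ∈ s := by
  refine ⟨?_, fun h => ⟨_, h, ?_⟩⟩
  · rintro ⟨q, hq, rfl⟩
    rwa [← homothety_mul_apply, inv_mul_cancel₀ hr, homothety_one, id_apply]
  · rw [← homothety_mul_apply, mul_inv_cancel₀ hr, homothety_one, id_apply]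

end AffineSpace

theorem IsCompact.bddAbove_setOf_exists_apply {X ι : Type*} [TopologicalSpace X] [Finite ι]
    {Ω : Set X} (hΩ : IsCompact Ω) {f : ι → X → ℝ} (hf : ∀ k, Continuous (f k)) :
    BddAbove {t | ∃ k, ∃ x ∈ Ω, t = f k x} := by
  have : {t | ∃ k, ∃ x ∈ Ω, t = f k x} = ⋃ k, f k '' Ω := by
    ext t
    simp [eq_comm]
  exact this ▸ (isCompact_iUnion fun k => hΩ.image (hf k)).bddAbove

section Simplex

variable {n : ℕ} (b : AffineBasis (Fin (n + 1)) ℝ (Fin n → ℝ))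

theorem simplexHull_eq_nonneg_coord : simplexHull b = {x | ∀ k, 0 ≤ b.coord k x} :=
  b.convexHull_eq_nonneg_coord

theorem mem_scaledSimplex_iff {σ : ℝ} (hσ : 0 < σ) (x : Fin n → ℝ) :
    x ∈ scaledSimplex b σ ↔ ∀ k, -b.coord k x ≤ (σ - 1) / (n + 1) := by
  rw [scaledSimplex, mem_homothety_image_iff hσ.ne', simplexHull_eq_nonneg_coord]
  refine forall_congr' fun k => ?_
  rw [apply_homothety, b.coord_apply_centroid (Finset.mem_univ k), Finset.card_univ,
    Fintype.card_fin, Nat.cast_succ]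
  have hN : (n + 1 : ℝ) ≠ 0 := by positivity
  calc 0 ≤ σ⁻¹ * (b.coord k x - (n + 1 : ℝ)⁻¹) + (n + 1 : ℝ)⁻¹
      ↔ 0 ≤ σ⁻¹ * (b.coord k x + (σ - 1) / (n + 1)) := by
        field_simp
        ring_nf
    _ ↔ -b.coord k x ≤ (σ - 1) / (n + 1) := by
        rw [mul_nonneg_iff_of_pos_left (inv_pos.mpr hσ), neg_le_iff_add_nonneg']

theorem subset_scaledSimplex_iff {Ω : Set (Fin n → ℝ)}
    (hbdd : BddAbove {t | ∃ k, ∃ x ∈ Ω, t = -b.coord k x}) (hne : Ω.Nonempty) {σ : ℝ}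
    (hσ : 0 < σ) :
    Ω ⊆ scaledSimplex b σ ↔ sSup {t | ∃ k, ∃ x ∈ Ω, t = -b.coord k x} ≤ (σ - 1) / (n + 1) := by
  obtain ⟨x, hx⟩ := hne
  rw [csSup_le_iff hbdd ⟨_, 0, x, hx, rfl⟩]
  simp only [Set.subset_def, mem_scaledSimplex_iff b hσ, Set.mem_ofPred_eq]
  exact ⟨fun h _ ⟨k, x, hx, ht⟩ => ht ▸ h x hx k, fun h x hx k => h _ ⟨k, x, hx, rfl⟩⟩

theorem sSup_neg_coord_pos {Ω : Set (Fin n → ℝ)}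
    (hbdd : BddAbove {t | ∃ k, ∃ x ∈ Ω, t = -b.coord k x}) (hns : ¬ Ω ⊆ simplexHull b) :
    0 < sSup {t | ∃ k, ∃ x ∈ Ω, t = -b.coord k x} := by
  obtain ⟨x, hx, hxS⟩ := Set.not_subset.mp hns
  simp only [simplexHull_eq_nonneg_coord, Set.mem_ofPred_eq, not_forall, not_le] at hxS
  obtain ⟨k, hk⟩ := hxS
  exact (neg_pos.mpr hk).trans_le (le_csSup hbdd ⟨k, x, hx, rfl⟩)

theorem absCoef_eq_of_not_subset {Ω : Set (Fin n → ℝ)} (hΩ : IsCompact Ω)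
    (hns : ¬ Ω ⊆ simplexHull b) :
    absCoef Ω b = (n + 1) * sSup {t | ∃ k, ∃ x ∈ Ω, t = -b.coord k x} + 1 := by
  have hbdd : BddAbove {t | ∃ k, ∃ x ∈ Ω, t = -b.coord k x} :=
    hΩ.bddAbove_setOf_exists_apply fun k => (b.coord k).continuous_of_finiteDimensional.neg
  have hne : Ω.Nonempty := (Set.nonempty_of_not_subset hns).mono Set.sdiff_subset
  have hpos := sSup_neg_coord_pos b hbdd hns
  set M := sSup {t | ∃ k, ∃ x ∈ Ω, t = -b.coord k x}
  have hN : (0 : ℝ) < n + 1 := by positivity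
  suffices {σ : ℝ | 1 ≤ σ ∧ Ω ⊆ scaledSimplex b σ} = Set.Ici ((n + 1) * M + 1) by
    rw [absCoef, this, csInf_Ici]
  ext σ
  simp only [Set.mem_ofPred_eq, Set.mem_Ici]
  refine ⟨fun ⟨hσ, hsub⟩ => ?_, fun hσ => ?_⟩
  · rw [subset_scaledSimplex_iff b hbdd hne (by linarith), le_div_iff₀ hN] at hsub
    linarith
  · have hσ1 : 1 ≤ σ := by nlinarith
    rw [subset_scaledSimplex_iff b hbdd hne (by linarith), le_div_iff₀ hN]
    exact ⟨hσ1, by linarith⟩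

end Simplex

theorem absCoef_eq_lagrange {n : ℕ} (v : Fin (n+1) → (Fin n → ℝ))
    (hv : AffineIndependent ℝ v)
    (lam : Fin (n+1) → ((Fin n → ℝ) →ᵃ[ℝ] ℝ))
    (hlam : ∀ j k, lam j (v k) = if j = k then 1 else 0)
    (Ω : Set (Fin n → ℝ)) (hΩ : IsCompact Ω)
    (hns : ¬ Ω ⊆ simplexHull v) :
    absCoef Ω v = (n + 1) * sSup {t : ℝ | ∃ k, ∃ x ∈ Ω, t = -(lam k x)} + 1 := by
  let b : AffineBasis (Fin (n + 1)) ℝ (Fin n → ℝ) :=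
    ⟨v, hv, hv.affineSpan_eq_top_iff_card_eq_finrank_add_one.mpr (by simp)⟩
  obtain rfl : lam = b.coord := funext fun j => b.eq_coord_of_apply_eq_ite (hlam j)
  exact absCoef_eq_of_not_subset b hΩ hns
end

section
/- With the notation of the geometric interpolation setup, suppose there exists a point x* ∈ Ω such that ‖P‖_Ω = Σ_{j=1}^d |λ_j(x*)| and exactly one of the numbers λ_1(x*),...,λ_d(x*) is negative (a '1-point'). Then the right-hand inequality ξ(T(Ω); S) ≤ (d/2)(‖P‖_Ω − 1) + 1 holds with equality, where S is the (d−1)-simplex with vertices T(x^(j)). -/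
/-- A function `ℝ^n → ℝ` is a monomial if it has the form `x ↦ ∏ xᵢ^{αᵢ}`. -/
def IsMonomial {n : ℕ} (φ : (Fin n → ℝ) → ℝ) : Prop :=
  ∃ α : Fin n → ℕ, ∀ x, φ x = ∏ i, x i ^ α i

/-!
Both sides are read off in barycentric coordinates with respect to the simplex `S` with vertices
`T(x⁽ʲ⁾)`: the point `T(x)` has coordinates `λⱼ(x)`, and `σS` is the set of points whose
coordinates are all at least `(1 - σ)/d`. Hence `ξ(T(Ω); S) = d μ + 1`, where `-μ` is the smallest
value of a Lagrange polynomial on `Ω`. Since `∑ λⱼ = 1`, every value satisfies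
`-2 λⱼ(x) ≤ ∑ |λᵢ(x)| - 1 ≤ ‖P‖_Ω - 1`, with equality at a 1-point `x*` for its negative
coordinate, so `μ = (‖P‖_Ω - 1)/2`.
-/

open Finset

lemma AffineMap.mem_image_homothety_iff {k V P : Type*} [Field k] [AddCommGroup V] [Module k V]
    [AddTorsor V P] (c : P) {r : k} (hr : r ≠ 0) (A : Set P) (p : P) :
    p ∈ homothety c r '' A ↔ homothety c r⁻¹ p ∈ A := by
  constructor
  · rintro ⟨q, hq, rfl⟩
    rwa [← homothety_mul_apply, inv_mul_cancel₀ hr, homothety_one, id_apply]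
  · exact fun h =>
      ⟨_, h, by rw [← homothety_mul_apply, mul_inv_cancel₀ hr, homothety_one, id_apply]⟩

section Simplex

variable {n : ℕ} {v : Fin (n+1) → (Fin n → ℝ)}

lemma affineCombination_mem_simplexHull_iff (hv : AffineIndependent ℝ v) {w : Fin (n+1) → ℝ}
    (hw : ∑ i, w i = 1) : univ.affineCombination ℝ v w ∈ simplexHull v ↔ ∀ i, 0 ≤ w i := by
  rw [simplexHull, show v = (⟨v, hv⟩ : Affine.Simplex ℝ (Fin n → ℝ) n).points from rfl,
    Affine.Simplex.convexHull_eq_closedInterior,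
    Affine.Simplex.affineCombination_mem_closedInterior_iff hw]
  exact ⟨fun h i => (h i).1,
    fun h i => ⟨h i, hw ▸ single_le_sum (fun j _ => h j) (mem_univ i)⟩⟩

lemma affineCombination_mem_scaledSimplex_iff (hv : AffineIndependent ℝ v) {σ : ℝ} (hσ : 0 < σ)
    {w : Fin (n+1) → ℝ} (hw : ∑ i, w i = 1) :
    univ.affineCombination ℝ v w ∈ scaledSimplex v σ ↔ ∀ i, (1 - σ) / ((n:ℝ) + 1) ≤ w i := by
  have hcard : (0:ℝ) < (n:ℝ) + 1 := by positivity
  have hc : ∑ i, (univ : Finset (Fin (n+1))).centroidWeights ℝ i = 1 :=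
    univ.sum_centroidWeights_eq_one_of_card_ne_zero ℝ (by simp)
  rw [scaledSimplex, AffineMap.mem_image_homothety_iff _ hσ.ne', centroid_def,
    AffineMap.homothety_eq_lineMap, lineMap_affineCombination,
    affineCombination_mem_simplexHull_iff hv (by
      simp only [AffineMap.lineMap_apply_module, Pi.add_apply, Pi.smul_apply, smul_eq_mul,
        sum_add_distrib, ← mul_sum, hc, hw]; ring)]
  refine forall_congr' fun i => ?_
  simp only [AffineMap.lineMap_apply_module, Pi.add_apply, Pi.smul_apply, smul_eq_mul,
    centroidWeights_apply, card_univ, Fintype.card_fin, Nat.cast_add, Nat.cast_one]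
  rw [div_le_iff₀ hcard, ← mul_nonneg_iff_of_pos_left (mul_pos hσ hcard)]
  constructor <;> intro h <;> field_simp at h ⊢ <;> linarith

lemma absCoef_image_affineCombination (hv : AffineIndependent ℝ v) {X : Type*} (s : Set X)
    (w : X → Fin (n+1) → ℝ) (hw : ∀ x, ∑ i, w x i = 1) {μ : ℝ} (hμ : 0 ≤ μ)
    (hlow : ∀ x ∈ s, ∀ i, -μ ≤ w x i) (hmin : ∃ x ∈ s, ∃ i, w x i = -μ) :
    absCoef ((fun x => univ.affineCombination ℝ v (w x)) '' s) v = ((n:ℝ) + 1) * μ + 1 := by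
  have hcard : (0:ℝ) < (n:ℝ) + 1 := by positivity
  have hthreshold : ∀ σ : ℝ, (1 - σ) / ((n:ℝ) + 1) ≤ -μ ↔ ((n:ℝ) + 1) * μ + 1 ≤ σ := fun σ => by
    rw [div_le_iff₀ hcard]; constructor <;> intro <;> linarith
  suffices {σ : ℝ | 1 ≤ σ ∧ _ ⊆ scaledSimplex v σ} = Set.Ici (((n:ℝ) + 1) * μ + 1) by
    rw [absCoef, this, csInf_Ici]
  ext σ
  simp only [Set.mem_ofPred_eq, Set.mem_Ici, Set.image_subset_iff]
  constructor
  · rintro ⟨hσ, hsub⟩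
    obtain ⟨x, hx, i, hi⟩ := hmin
    rw [← hthreshold, ← hi]
    exact (affineCombination_mem_scaledSimplex_iff hv (by linarith) (hw x)).1 (hsub hx) i
  · intro hσ
    have hσ1 : 1 ≤ σ := by nlinarith
    exact ⟨hσ1, fun x hx => (affineCombination_mem_scaledSimplex_iff hv (by linarith) (hw x)).2
      fun i => ((hthreshold σ).2 hσ).trans (hlow x hx i)⟩

end Simplex

section Lagrange

variable {K X ι : Type*} [Field K] [Fintype ι] [DecidableEq ι] {φ : ι → X → K} {nodes : ι → X}

lemma eq_zero_of_mem_span_of_eval_nodes (hadm : (Matrix.of fun i j => φ i (nodes j)).det ≠ 0)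
    {f : X → K} (hf : f ∈ Submodule.span K (Set.range φ)) (hz : ∀ k, f (nodes k) = 0) :
    f = 0 := by
  obtain ⟨c, rfl⟩ := (Submodule.mem_span_range_iff_exists_fun K).1 hf
  suffices c = 0 by simp [this]
  refine Matrix.eq_zero_of_vecMul_eq_zero hadm (funext fun k => ?_)
  simpa [Matrix.vecMul, dotProduct] using hz k

lemma eq_sum_smul_lagrange (hadm : (Matrix.of fun i j => φ i (nodes j)).det ≠ 0)
    {lam : ι → X → K} (hspan : ∀ j, lam j ∈ Submodule.span K (Set.range φ))
    (hdelta : ∀ j k, lam j (nodes k) = if j = k then 1 else 0)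
    {f : X → K} (hf : f ∈ Submodule.span K (Set.range φ)) :
    f = ∑ j, f (nodes j) • lam j := by
  refine sub_eq_zero.1 (eq_zero_of_mem_span_of_eval_nodes hadm
    (sub_mem hf (sum_mem fun j _ => Submodule.smul_mem _ _ (hspan j))) fun k => ?_)
  simp [hdelta]

end Lagrange

lemma IsMonomial.continuous {n : ℕ} {φ : (Fin n → ℝ) → ℝ} (h : IsMonomial φ) : Continuous φ := by
  obtain ⟨α, hα⟩ := h
  rw [funext hα]
  fun_prop

lemma continuous_of_mem_span {X ι : Type*} [TopologicalSpace X] {φ : ι → X → ℝ}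
    (hφ : ∀ i, Continuous (φ i)) {f : X → ℝ} (hf : f ∈ Submodule.span ℝ (Set.range φ)) :
    Continuous f := by
  induction hf using Submodule.span_induction with
  | mem g hg => obtain ⟨i, rfl⟩ := hg; exact hφ i
  | zero => exact continuous_const
  | add g h _ _ hg hh => exact hg.add hh
  | smul a g _ hg => exact hg.const_smul a

lemma le_sSup_of_isCompact {X : Type*} [TopologicalSpace X] {Ω : Set X} (hΩ : IsCompact Ω)
    {g : X → ℝ} (hg : Continuous g) {x : X} (hx : x ∈ Ω) :
    g x ≤ sSup {s : ℝ | ∃ y ∈ Ω, s = g y} := by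
  obtain ⟨M, hM⟩ := hΩ.bddAbove_image hg.continuousOn
  refine le_csSup ⟨M, ?_⟩ ⟨x, hx, rfl⟩
  rintro _ ⟨y, hy, rfl⟩
  exact hM ⟨y, hy, rfl⟩

section Weights

variable {ι : Type*} [Fintype ι] (w : ι → ℝ)

lemma neg_two_mul_le_sum_abs_sub_sum (j : ι) : -(2 * w j) ≤ ∑ i, |w i| - ∑ i, w i := by
  rw [← sum_sub_distrib]
  calc -(2 * w j) ≤ |w j| - w j := by linarith [neg_le_abs (w j)]
    _ ≤ ∑ i, (|w i| - w i) :=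
      single_le_sum (fun i _ => sub_nonneg.2 (le_abs_self (w i))) (mem_univ j)

lemma sum_abs_sub_sum_of_unique_neg {j : ι} (hj : w j ≤ 0) (hpos : ∀ i ≠ j, 0 ≤ w i) :
    ∑ i, |w i| - ∑ i, w i = -(2 * w j) := by
  rw [← sum_sub_distrib, sum_eq_single j (fun i _ hi => by rw [abs_of_nonneg (hpos i hi), sub_self])
    (by simp), abs_of_nonpos hj]
  ring

end Weights

theorem absCoef_eq_of_one_point {n m : ℕ}
    (Ω : Set (Fin n → ℝ)) (hΩ : IsCompact Ω)
    (φ : Fin (m+1) → ((Fin n → ℝ) → ℝ))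
    (hmono : ∀ i, IsMonomial (φ i))
    (h1 : ∀ x, φ 0 x = 1)
    (nodes : Fin (m+1) → (Fin n → ℝ))
    (hadm : (Matrix.of fun i j => φ i (nodes j)).det ≠ 0)
    (lam : Fin (m+1) → ((Fin n → ℝ) → ℝ))
    (hspan : ∀ j, lam j ∈ Submodule.span ℝ (Set.range φ))
    (hdelta : ∀ j k, lam j (nodes k) = if j = k then 1 else 0)
    (T : (Fin n → ℝ) → (Fin m → ℝ)) (hT : ∀ x i, T x i = φ i.succ x)
    (hSimp : AffineIndependent ℝ (fun j => T (nodes j)))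
    (normP : ℝ)
    (hnorm : normP = sSup {s : ℝ | ∃ x ∈ Ω, s = ∑ j, |lam j x|})
    (h1pt : ∃ x ∈ Ω, normP = ∑ j, |lam j x| ∧ (∃! j, lam j x < 0)) :
    absCoef (T '' Ω) (fun j => T (nodes j)) = ((m : ℝ) + 1)/2 * (normP - 1) + 1 := by
  have hlagrange : ∀ f ∈ Submodule.span ℝ (Set.range φ), f = ∑ j, f (nodes j) • lam j :=
    fun f hf => eq_sum_smul_lagrange hadm hspan hdelta hf
  have hsum (x : Fin n → ℝ) : ∑ j, lam j x = 1 := by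
    simpa [h1] using (congrFun (hlagrange _ (Submodule.subset_span ⟨0, rfl⟩)) x).symm
  have hTx (x : Fin n → ℝ) : T x = univ.affineCombination ℝ (fun j => T (nodes j)) (lam · x) := by
    rw [univ.affineCombination_eq_linear_combination _ _ (hsum x)]
    ext i
    simpa [hT, mul_comm] using congrFun (hlagrange _ (Submodule.subset_span ⟨i.succ, rfl⟩)) x
  have hle : ∀ x ∈ Ω, ∑ j, |lam j x| ≤ normP := fun x hx =>
    hnorm ▸ le_sSup_of_isCompact hΩ (continuous_finsetSum _ fun j _ =>
      (continuous_of_mem_span (fun i => (hmono i).continuous) (hspan j)).abs) hx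
  have hlow : ∀ x ∈ Ω, ∀ j, -((normP - 1) / 2) ≤ lam j x := fun x hx j => by
    linarith [neg_two_mul_le_sum_abs_sub_sum (lam · x) j, hsum x, hle x hx]
  obtain ⟨xs, hxs, hPeq, k, hkneg, hkuniq⟩ := h1pt
  have hk : lam k xs = -((normP - 1) / 2) := by
    have := sum_abs_sub_sum_of_unique_neg (lam · xs) hkneg.le
      fun j hj => not_lt.1 fun h => hj (hkuniq j h)
    linarith [hsum xs]
  rw [Set.image_congr fun x _ => hTx x,
    absCoef_image_affineCombination hSimp Ω _ hsum (by linarith) hlow ⟨xs, hxs, k, hk⟩]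
  ring
end

section
/- For quadratic interpolation on [−1,1] with symmetric nodes −r, 0, r where 0 < r ≤ 1, the norm of the interpolation projector P : C[−1,1] → Π_2(R^1) equals max(5/4, 2/r² − 1). -/
/-- The Lagrange basis polynomial for node `j` of the node family `c`. -/
noncomputable def lag {k : ℕ} (c : Fin k → ℝ) (j : Fin k) (x : ℝ) : ℝ :=
  ∏ i ∈ Finset.univ.erase j, (x - c i) / (c j - c i)

/-- The norm of the interpolation projector with nodes `c`, i.e. the maximum over
`[-1,1]` of the Lebesgue function `x ↦ ∑ⱼ |λⱼ(x)|`. -/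
noncomputable def projNorm {k : ℕ} (c : Fin k → ℝ) : ℝ :=
  sSup {s : ℝ | ∃ x ∈ Set.Icc (-1:ℝ) 1, s = ∑ j, |lag c j x|}

/-!
On `[0, r]` the signs of the Lagrange basis are `(-, +, +)`, so the Lebesgue function equals
`1 - 2λ₁(x) = 1 + x(r - x)/r²`, which peaks at `x = r/2` with value `5/4`. On `[r, 1]` they are
`(+, -, +)`, so it equals `1 - 2λ₂(x) = 2x²/r² - 1`, increasing up to `2/r² - 1` at `x = 1`.
The Lebesgue function is even, so these two bounds and the two attained values give the norm.
-/

noncomputable def lebesgueSymm (r x : ℝ) : ℝ :=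
  |x * (x - r) / (2 * r ^ 2)| + |(r ^ 2 - x ^ 2) / r ^ 2| + |x * (x + r) / (2 * r ^ 2)|

section LagrangeBasis

variable (r x : ℝ)

theorem lag_symm_zero : lag ![-r, 0, r] 0 x = x * (x - r) / (2 * r ^ 2) := by
  rw [lag, show Finset.univ.erase (0 : Fin 3) = {1, 2} by decide, Finset.prod_pair (by decide)]
  simp only [Matrix.cons_val_zero, Matrix.cons_val_one, Matrix.cons_val]
  ring

theorem lag_symm_one : lag ![-r, 0, r] 1 x = (r ^ 2 - x ^ 2) / r ^ 2 := by
  rw [lag, show Finset.univ.erase (1 : Fin 3) = {0, 2} by decide, Finset.prod_pair (by decide)]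
  simp only [Matrix.cons_val_zero, Matrix.cons_val_one, Matrix.cons_val]
  ring

theorem lag_symm_two : lag ![-r, 0, r] 2 x = x * (x + r) / (2 * r ^ 2) := by
  rw [lag, show Finset.univ.erase (2 : Fin 3) = {0, 1} by decide, Finset.prod_pair (by decide)]
  simp only [Matrix.cons_val_zero, Matrix.cons_val_one, Matrix.cons_val]
  ring

theorem sum_abs_lag_symm : ∑ j, |lag ![-r, 0, r] j x| = lebesgueSymm r x := by
  rw [Fin.sum_univ_three, lag_symm_zero, lag_symm_one, lag_symm_two, lebesgueSymm]

end LagrangeBasis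

theorem lebesgueSymm_neg (r x : ℝ) : lebesgueSymm r (-x) = lebesgueSymm r x := by
  unfold lebesgueSymm
  rw [show -x * (-x - r) = x * (x + r) by ring, show -x * (-x + r) = x * (x - r) by ring,
    neg_sq]
  ring

section

variable {r x : ℝ}

theorem lebesgueSymm_of_nonneg_of_le (hr : 0 < r) (hx : 0 ≤ x) (hxr : x ≤ r) :
    lebesgueSymm r x = 1 + x * (r - x) / r ^ 2 := by
  have hr2 : 0 < r ^ 2 := by positivity
  have h0 : x * (x - r) / (2 * r ^ 2) ≤ 0 :=
    div_nonpos_of_nonpos_of_nonneg (by nlinarith) (by positivity)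
  have h1 : 0 ≤ (r ^ 2 - x ^ 2) / r ^ 2 := div_nonneg (by nlinarith) hr2.le
  have h2 : 0 ≤ x * (x + r) / (2 * r ^ 2) := div_nonneg (by nlinarith) (by positivity)
  rw [lebesgueSymm, abs_of_nonpos h0, abs_of_nonneg h1, abs_of_nonneg h2]
  field_simp
  ring

theorem lebesgueSymm_of_ge (hr : 0 < r) (hrx : r ≤ x) :
    lebesgueSymm r x = 2 * x ^ 2 / r ^ 2 - 1 := by
  have hr2 : 0 < r ^ 2 := by positivity
  have h0 : 0 ≤ x * (x - r) / (2 * r ^ 2) := div_nonneg (by nlinarith) (by positivity)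
  have h1 : (r ^ 2 - x ^ 2) / r ^ 2 ≤ 0 := div_nonpos_of_nonpos_of_nonneg (by nlinarith) hr2.le
  have h2 : 0 ≤ x * (x + r) / (2 * r ^ 2) := div_nonneg (by nlinarith) (by positivity)
  rw [lebesgueSymm, abs_of_nonneg h0, abs_of_nonpos h1, abs_of_nonneg h2]
  field_simp
  ring

theorem lebesgueSymm_half (hr : 0 < r) : lebesgueSymm r (r / 2) = 5 / 4 := by
  rw [lebesgueSymm_of_nonneg_of_le hr (by linarith) (by linarith)]
  field_simp
  ring

theorem lebesgueSymm_one (hr0 : 0 < r) (hr1 : r ≤ 1) : lebesgueSymm r 1 = 2 / r ^ 2 - 1 := by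
  rw [lebesgueSymm_of_ge hr0 hr1, one_pow, mul_one]

theorem lebesgueSymm_le_of_nonneg (hr0 : 0 < r) (hx0 : 0 ≤ x) (hx1 : x ≤ 1) :
    lebesgueSymm r x ≤ max (5 / 4) (2 / r ^ 2 - 1) := by
  have hr2 : 0 < r ^ 2 := by positivity
  rcases le_total x r with hxr | hrx
  · refine le_max_of_le_left ?_
    rw [lebesgueSymm_of_nonneg_of_le hr0 hx0 hxr, ← le_sub_iff_add_le', div_le_iff₀ hr2]
    nlinarith [sq_nonneg (r - 2 * x)]
  · refine le_max_of_le_right ?_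
    rw [lebesgueSymm_of_ge hr0 hrx]
    gcongr
    nlinarith

theorem lebesgueSymm_le (hr0 : 0 < r) (hx : x ∈ Set.Icc (-1 : ℝ) 1) :
    lebesgueSymm r x ≤ max (5 / 4) (2 / r ^ 2 - 1) := by
  obtain ⟨hx1, hx2⟩ := hx
  rcases le_total 0 x with hx0 | hx0
  · exact lebesgueSymm_le_of_nonneg hr0 hx0 hx2
  · rw [← lebesgueSymm_neg]
    exact lebesgueSymm_le_of_nonneg hr0 (by linarith) (by linarith)

end

theorem quadratic_symmetric_projNorm (r : ℝ) (hr0 : 0 < r) (hr1 : r ≤ 1) :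
    projNorm ![-r, 0, r] = max (5/4) (2/r^2 - 1) := by
  simp only [projNorm, sum_abs_lag_symm]
  refine IsGreatest.csSup_eq ⟨?_, ?_⟩
  · rcases le_total (2 / r ^ 2 - 1) (5 / 4 : ℝ) with h | h
    · exact ⟨r / 2, ⟨by linarith, by linarith⟩, by rw [max_eq_left h, lebesgueSymm_half hr0]⟩
    · exact ⟨1, ⟨by norm_num, le_rfl⟩, by rw [max_eq_right h, lebesgueSymm_one hr0 hr1]⟩
  · rintro s ⟨x, hx, rfl⟩
    exact lebesgueSymm_le hr0 hx
end

section
/- For quadratic interpolation on [−1,1] with symmetric nodes −r, 0, r (0 < r ≤ 1), letting S ⊂ R² be the triangle with vertices (−r, r²), (0,0), (r, r²) and T(x) = (x, x²), the absorption coefficient satisfies ξ(T([−1,1]); S) = max(11/8, 3/r² − 2). -/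
def isoTriangle (a b c : ℝ) : Fin 3 → Fin 2 → ℝ := ![![-a, c], ![0, b], ![a, c]]

theorem mem_convexHull_isoTriangle_iff {a b c : ℝ} (ha : 0 < a) (hbc : b < c)
    {p : Fin 2 → ℝ} :
    p ∈ convexHull ℝ (Set.range (isoTriangle a b c)) ↔
      (c - b) * |p 0| ≤ a * (p 1 - b) ∧ p 1 ≤ c := by
  constructor
  · refine fun hp => convexHull_min
      (t := {q : Fin 2 → ℝ | (c - b) * |q 0| ≤ a * (q 1 - b) ∧ q 1 ≤ c}) ?_ ?_ hp
    · rintro _ ⟨i, rfl⟩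
      fin_cases i <;> simp [isoTriangle, abs_of_pos ha, hbc.le, mul_comm]
    · rintro p ⟨hp0, hp1⟩ q ⟨hq0, hq1⟩ s t hs ht hst
      have habs : |s * p 0 + t * q 0| ≤ s * |p 0| + t * |q 0| := by
        simpa [abs_mul, abs_of_nonneg hs, abs_of_nonneg ht] using abs_add_le (s * p 0) (t * q 0)
      obtain rfl : t = 1 - s := by linarith
      simp only [Set.mem_ofPred_eq, Pi.add_apply, Pi.smul_apply, smul_eq_mul]
      constructor
      · nlinarith [mul_le_mul_of_nonneg_left habs (sub_nonneg.2 hbc.le),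
          mul_le_mul_of_nonneg_left hp0 hs, mul_le_mul_of_nonneg_left hq0 ht]
      · nlinarith [mul_le_mul_of_nonneg_left hp1 hs, mul_le_mul_of_nonneg_left hq1 ht]
  · rintro ⟨hp0, hp1⟩
    have hd : 0 < c - b := sub_pos.2 hbc
    -- barycentric coordinates of `p`
    set w : Fin 3 → ℝ := ![(a * (p 1 - b) - (c - b) * p 0) / (2 * a * (c - b)),
      (c - p 1) / (c - b), (a * (p 1 - b) + (c - b) * p 0) / (2 * a * (c - b))] with hw
    have hw0 : ∀ i ∈ Finset.univ, 0 ≤ w i := by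
      intro i _
      have := mul_le_mul_of_nonneg_left (neg_abs_le (p 0)) hd.le
      have := mul_le_mul_of_nonneg_left (le_abs_self (p 0)) hd.le
      fin_cases i <;>
        simp only [hw, Fin.isValue, Fin.zero_eta, Fin.mk_one, Fin.reduceFinMk,
          Matrix.cons_val_zero, Matrix.cons_val_one, Matrix.cons_val] <;>
        apply div_nonneg <;> nlinarith
    have hw1 : ∑ i, w i = 1 := by
      simp only [hw, Fin.sum_univ_three, Matrix.cons_val_zero, Matrix.cons_val_one,
        Matrix.cons_val]
      field_simp
      ring
    have hpw : p = ∑ i, w i • isoTriangle a b c i := by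
      funext j
      fin_cases j <;>
        simp only [hw, isoTriangle, Finset.sum_apply, Pi.smul_apply, smul_eq_mul,
          Fin.sum_univ_three, Fin.isValue, Fin.zero_eta, Fin.mk_one, Matrix.cons_val',
          Matrix.cons_val_zero, Matrix.cons_val_one, Matrix.cons_val_fin_one, Matrix.cons_val] <;>
        field_simp <;> ring
    rw [hpw]
    exact (convex_convexHull ℝ _).sum_mem hw0 hw1
      fun i _ => subset_convexHull ℝ _ (Set.mem_range_self i)

theorem centroid_isoTriangle (a b c : ℝ) :
    Finset.univ.centroid ℝ (isoTriangle a b c) = ![0, (b + 2 * c) / 3] := by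
  rw [Finset.centroid_def,
    Finset.affineCombination_eq_linear_combination _ _ _
      (Finset.sum_centroidWeights_eq_one_of_nonempty ℝ _ Finset.univ_nonempty)]
  funext j
  fin_cases j <;>
    simp only [Finset.centroidWeights_apply, Finset.card_univ, Fintype.card_fin, isoTriangle,
      Finset.sum_apply, Pi.smul_apply, smul_eq_mul, Fin.sum_univ_three, Fin.isValue,
      Fin.zero_eta, Fin.mk_one, Matrix.cons_val', Matrix.cons_val_zero, Matrix.cons_val_one,
      Matrix.cons_val_fin_one, Matrix.cons_val] <;>
    ring

theorem homothety_comp_isoTriangle (a b c k σ : ℝ) :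
    AffineMap.homothety ![0, k] σ ∘ isoTriangle a b c =
      isoTriangle (σ * a) ((1 - σ) * k + σ * b) ((1 - σ) * k + σ * c) := by
  funext i j
  simp only [Function.comp_apply, AffineMap.homothety_apply, vsub_eq_sub, vadd_eq_add,
    Pi.add_apply, Pi.smul_apply, Pi.sub_apply, smul_eq_mul]
  fin_cases i <;> fin_cases j <;>
    simp only [isoTriangle, Fin.isValue, Fin.zero_eta, Fin.mk_one, Fin.reduceFinMk,
      Matrix.cons_val', Matrix.cons_val_zero, Matrix.cons_val_one, Matrix.cons_val_fin_one,
      Matrix.cons_val] <;>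
    ring

theorem scaledSimplex_isoTriangle (a b c σ : ℝ) :
    scaledSimplex (isoTriangle a b c) σ = convexHull ℝ (Set.range
      (isoTriangle (σ * a) ((1 - σ) * ((b + 2 * c) / 3) + σ * b)
        ((1 - σ) * ((b + 2 * c) / 3) + σ * c))) := by
  rw [scaledSimplex, simplexHull, AffineMap.image_convexHull, ← Set.range_comp,
    centroid_isoTriangle, homothety_comp_isoTriangle]

theorem absCoef_eq_of_forall_subset_iff {n : ℕ} {Ω : Set (Fin n → ℝ)}
    {v : Fin (n+1) → Fin n → ℝ} {M : ℝ} (hM : 1 ≤ M)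
    (h : ∀ σ, 1 ≤ σ → (Ω ⊆ scaledSimplex v σ ↔ M ≤ σ)) :
    absCoef Ω v = M := by
  have hset : {σ : ℝ | 1 ≤ σ ∧ Ω ⊆ scaledSimplex v σ} = Set.Ici M := by
    ext σ
    exact ⟨fun ⟨hσ, hΩ⟩ => (h σ hσ).1 hΩ, fun hσ => ⟨hM.trans hσ, (h σ (hM.trans hσ)).2 hσ⟩⟩
  rw [absCoef, hset, csInf_Ici]

theorem parabola_subset_scaledSimplex_iff {r σ : ℝ} (hr0 : 0 < r) (hr1 : r ≤ 1) (hσ : 0 < σ) :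
    (fun x : ℝ => ![x, x^2]) '' Set.Icc (-1) 1 ⊆ scaledSimplex (isoTriangle r 0 (r^2)) σ ↔
      max (11/8) (3/r^2 - 2) ≤ σ := by
  have hr2 : 0 < r^2 := by positivity
  have hmem : ∀ x : ℝ, ![x, x^2] ∈ scaledSimplex (isoTriangle r 0 (r^2)) σ ↔
      r * |x| ≤ x^2 - (1 - σ) * (2 * r^2 / 3) ∧ x^2 ≤ (2 + σ) * r^2 / 3 := by
    intro x
    rw [scaledSimplex_isoTriangle, mem_convexHull_isoTriangle_iff (by positivity) (by nlinarith)]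
    simp only [Matrix.cons_val_zero, Matrix.cons_val_one]
    have hσr : 0 < σ * r := by positivity
    refine and_congr ⟨fun h => ?_, fun h => ?_⟩ ⟨fun h => by linarith, fun h => by linarith⟩
    · nlinarith
    · nlinarith
  rw [Set.image_subset_iff]
  simp only [Set.subset_def, Set.mem_preimage, hmem]
  rw [max_le_iff, sub_le_iff_le_add, div_le_iff₀ hr2]
  constructor
  · intro h
    have hhalf := (h (r/2) ⟨by linarith, by linarith⟩).1
    have hone := (h 1 ⟨by norm_num, le_rfl⟩).2
    rw [abs_of_pos (by positivity)] at hhalf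
    constructor <;> nlinarith
  · rintro ⟨h118, h3⟩ x ⟨hx0, hx1⟩
    have hx : x^2 ≤ 1 := by nlinarith
    constructor
    · nlinarith [sq_nonneg (|x| - r/2), sq_abs x]
    · nlinarith

theorem quadratic_symmetric_absCoef (r : ℝ) (hr0 : 0 < r) (hr1 : r ≤ 1) :
    absCoef ((fun x : ℝ => ![x, x^2]) '' Set.Icc (-1) 1)
        ![![-r, r^2], ![0, 0], ![r, r^2]] =
      max (11/8) (3/r^2 - 2) :=
  absCoef_eq_of_forall_subset_iff (by norm_num) fun _ hσ =>
    parabola_subset_scaledSimplex_iff hr0 hr1 (by linarith)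
end

section
/- Let T(x) = (x, x²) and G = T([−1,1]) = {(x,x²) : −1 ≤ x ≤ 1} ⊂ R². The minimal absorption coefficient ξ_2(G) := min{ξ(G; S) : S a nondegenerate triangle with vertices in G} equals 11/8. -/
/-!
Place the vertices at parabola points over `a < b < c`. The vertices lie on or above the chord
line through the vertices over `a` and `b`, the arc point over `(a + b)/2` lies `(b - a)²/4` below
it, and dilating by `σ` about the centroid lowers that line by only `(σ - 1)(c - a)(c - b)/3`.
Adding this to the same estimate for the chord over `[b, c]` gives
`3((b - a)² + (c - b)²) ≤ 4(σ - 1)(c - a)²`, hence `σ ≥ 11/8`. For the nodes `-1, 0, 1` the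
barycentric coordinates of `(x, x²)` are `x(x - 1)/2, 1 - x², x(x + 1)/2`, all at least
`-1/8 = (1 - 11/8)/3` on `[-1, 1]`, so `11/8` is attained.
-/

open Finset

section ScaledSimplex

variable {n : ℕ} (v : Fin (n+1) → (Fin n → ℝ))

theorem centroid_univ_eq_smul_sum : univ.centroid ℝ v = ((n : ℝ) + 1)⁻¹ • ∑ i, v i := by
  rw [centroid_def, affineCombination_eq_linear_combination _ _ _
    (sum_centroidWeights_eq_one_of_nonempty ℝ _ univ_nonempty)]
  simp [centroidWeights, smul_sum]

theorem scaledSimplex_comp_perm (e : Equiv.Perm (Fin (n+1))) (σ : ℝ) :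
    scaledSimplex (v ∘ e) σ = scaledSimplex v σ := by
  have hc : univ.centroid ℝ (v ∘ e) = univ.centroid ℝ v := by
    simpa using (centroid_map ℝ univ e.toEmbedding v).symm
  rw [scaledSimplex, scaledSimplex, simplexHull, simplexHull, e.surjective.range_comp, hc]

theorem absCoef_comp_perm (Ω : Set (Fin n → ℝ)) (e : Equiv.Perm (Fin (n+1))) :
    absCoef Ω (v ∘ e) = absCoef Ω v := by
  simp only [absCoef, scaledSimplex_comp_perm]

variable {v}

theorem absCoef_le {Ω : Set (Fin n → ℝ)} {σ : ℝ} (hσ : 1 ≤ σ) (hΩ : Ω ⊆ scaledSimplex v σ) :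
    absCoef Ω v ≤ σ :=
  csInf_le ⟨1, fun _ h ↦ h.1⟩ ⟨hσ, hΩ⟩

theorem le_absCoef {Ω : Set (Fin n → ℝ)} {s : ℝ} (hne : ∃ σ, 1 ≤ σ ∧ Ω ⊆ scaledSimplex v σ)
    (hs : ∀ σ, 1 ≤ σ → Ω ⊆ scaledSimplex v σ → s ≤ σ) : s ≤ absCoef Ω v :=
  le_csInf hne fun σ h ↦ hs σ h.1 h.2

theorem sum_smul_mem_scaledSimplex {σ : ℝ} (hσ : 0 < σ) (w : Fin (n+1) → ℝ)
    (hw : ∑ i, w i = 1) (hw_ge : ∀ i, (1 - σ) / (n + 1) ≤ w i) :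
    ∑ i, w i • v i ∈ scaledSimplex v σ := by
  set μ : Fin (n+1) → ℝ := fun i ↦ (w i - (1 - σ) / (n + 1)) / σ
  have hμ : ∑ i, μ i = 1 := by
    simp only [μ, ← sum_div, sum_sub_distrib, hw, sum_const, card_univ, Fintype.card_fin,
      nsmul_eq_mul]
    push_cast
    field_simp
    ring
  refine ⟨∑ i, μ i • v i, (convex_convexHull ℝ _).sum_mem
    (fun i _ ↦ div_nonneg (sub_nonneg.2 (hw_ge i)) hσ.le) hμ
    (fun i _ ↦ subset_convexHull ℝ _ ⟨i, rfl⟩), ?_⟩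
  have hσμ : σ • ∑ i, μ i • v i = ∑ i, w i • v i - ((1 - σ) / (n + 1)) • ∑ i, v i := by
    simp only [μ, smul_sum, smul_smul, mul_div_cancel₀ _ hσ.ne', sub_smul, sum_sub_distrib]
  rw [AffineMap.homothety_apply, vsub_eq_sub, vadd_eq_add, smul_sub, hσμ,
    centroid_univ_eq_smul_sum]
  have : (n : ℝ) + 1 ≠ 0 := by positivity
  match_scalars
  field_simp
  ring

theorem exists_subset_scaledSimplex {Ω : Set (Fin n → ℝ)} (hΩ : IsCompact Ω)
    (hv : AffineIndependent ℝ v) : ∃ σ, 1 ≤ σ ∧ Ω ⊆ scaledSimplex v σ := by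
  have hspan : affineSpan ℝ (Set.range v) = ⊤ := by
    simp [hv.affineSpan_eq_top_iff_card_eq_finrank_add_one]
  let b : AffineBasis (Fin (n+1)) ℝ (Fin n → ℝ) := ⟨v, hv, hspan⟩
  have hcoord : Continuous fun y i ↦ b.coord i y :=
    continuous_pi fun i ↦ (b.coord i).continuous_of_finiteDimensional
  obtain ⟨C, hC⟩ := hΩ.exists_bound_of_continuousOn hcoord.continuousOn
  refine ⟨1 + (n + 1) * |C|, le_add_of_nonneg_right (by positivity), fun y hy ↦ ?_⟩
  have hy_eq : ∑ i, b.coord i y • v i = y := b.linear_combination_coord_eq_self y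
  rw [← hy_eq]
  refine sum_smul_mem_scaledSimplex (by positivity) _ (b.sum_coord_apply_eq_one y) fun i ↦ ?_
  have hi : |b.coord i y| ≤ |C| := ((norm_le_pi_norm _ i).trans (hC y hy)).trans (le_abs_self C)
  have : (1 - (1 + (n + 1) * |C|)) / ((n : ℝ) + 1) = -|C| := by field_simp; ring
  rw [this]
  exact neg_le_of_abs_le hi

theorem le_of_mem_scaledSimplex (f : (Fin n → ℝ) →ₗ[ℝ] ℝ) {m σ : ℝ} (hσ : 0 ≤ σ)
    (hv : ∀ i, f (v i) ≤ m) {y : Fin n → ℝ} (hy : y ∈ scaledSimplex v σ) :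
    f y ≤ σ * m + (1 - σ) * f (univ.centroid ℝ v) := by
  obtain ⟨z, hz, rfl⟩ := hy
  have hfz : f z ≤ m :=
    convexHull_min (Set.range_subset_iff.2 hv) (convex_halfSpace_le f.isLinear m) hz
  rw [AffineMap.homothety_apply, vsub_eq_sub, vadd_eq_add, map_add, map_smul, map_sub,
    smul_eq_mul]
  nlinarith

end ScaledSimplex

section Parabola

def parabola (x : ℝ) : Fin 2 → ℝ := ![x, x ^ 2]

theorem continuous_parabola : Continuous parabola := by
  unfold parabola
  fun_prop

theorem sq_sub_div_four_le_of_midpoint_mem {τ : Fin 3 → ℝ} {p q σ : ℝ} (hσ : 0 ≤ σ)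
    (hτ : ∀ i, 0 ≤ (τ i - p) * (τ i - q))
    (hmid : parabola ((p + q) / 2) ∈ scaledSimplex (parabola ∘ τ) σ) :
    (q - p) ^ 2 / 4 ≤ (σ - 1) / 3 * ∑ i, (τ i - p) * (τ i - q) := by
  -- `f ≤ p * q` is the closed half-plane above the chord through `parabola p` and `parabola q`.
  let f : (Fin 2 → ℝ) →ₗ[ℝ] ℝ := (p + q) • LinearMap.proj 0 - LinearMap.proj 1
  have hf : ∀ t, f (parabola t) = p * q - (t - p) * (t - q) := fun t ↦ by
    simp [f, parabola]
    ring
  have hcen : f (univ.centroid ℝ (parabola ∘ τ)) =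
      p * q - (∑ i, (τ i - p) * (τ i - q)) / 3 := by
    rw [centroid_univ_eq_smul_sum, map_smul, map_sum]
    simp only [Function.comp_apply, hf, sum_sub_distrib, sum_const, card_univ, Fintype.card_fin,
      smul_eq_mul, nsmul_eq_mul]
    push_cast
    ring
  have key := le_of_mem_scaledSimplex f hσ (m := p * q)
    (fun i ↦ by rw [Function.comp_apply, hf]; linarith [hτ i]) hmid
  rw [hf, hcen] at key
  linear_combination key

theorem eleven_eighths_le_of_subset {τ : Fin 3 → ℝ} (hτ : StrictMono τ) (hτ₀ : -1 ≤ τ 0)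
    (hτ₂ : τ 2 ≤ 1) {σ : ℝ} (hσ : 0 ≤ σ)
    (hsub : parabola '' Set.Icc (-1) 1 ⊆ scaledSimplex (parabola ∘ τ) σ) : 11 / 8 ≤ σ := by
  have h₀₁ : τ 0 < τ 1 := hτ (by decide)
  have h₁₂ : τ 1 < τ 2 := hτ (by decide)
  have hmem : ∀ x ∈ Set.Icc (τ 0) (τ 2), parabola x ∈ scaledSimplex (parabola ∘ τ) σ :=
    fun x hx ↦ hsub ⟨x, ⟨hτ₀.trans hx.1, hx.2.trans hτ₂⟩, rfl⟩
  have left := sq_sub_div_four_le_of_midpoint_mem (p := τ 0) (q := τ 1) hσ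
    (fun i ↦ by fin_cases i <;> simp; nlinarith) (hmem _ ⟨by linarith, by linarith⟩)
  have right := sq_sub_div_four_le_of_midpoint_mem (p := τ 1) (q := τ 2) hσ
    (fun i ↦ by fin_cases i <;> simp; nlinarith) (hmem _ ⟨by linarith, by linarith⟩)
  simp only [Fin.sum_univ_three, sub_self, mul_zero, zero_mul, add_zero, zero_add] at left right
  nlinarith [sq_nonneg (τ 0 + τ 2 - 2 * τ 1), mul_pos (sub_pos.2 h₀₁) (sub_pos.2 h₁₂)]

theorem parabola_subset_scaledSimplex_eleven_eighths :
    parabola '' Set.Icc (-1) 1 ⊆ scaledSimplex (parabola ∘ ![-1, 0, 1]) (11 / 8) := by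
  rintro _ ⟨x, ⟨hx₁, hx₂⟩, rfl⟩
  have hx : parabola x = ∑ i, ![x * (x - 1) / 2, 1 - x ^ 2, x * (x + 1) / 2] i •
      (parabola ∘ ![-1, 0, 1]) i := by
    ext j
    fin_cases j <;> simp [parabola, Fin.sum_univ_three] <;> ring
  rw [hx]
  refine sum_smul_mem_scaledSimplex (by norm_num) _ (by simp [Fin.sum_univ_three]; ring)
    fun i ↦ ?_
  fin_cases i <;> norm_num <;> nlinarith [sq_nonneg (2 * x - 1), sq_nonneg (2 * x + 1)]

theorem strictMono_neg_one_zero_one : StrictMono ![(-1 : ℝ), 0, 1] := by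
  refine Fin.strictMono_iff_lt_succ.2 fun i ↦ ?_
  fin_cases i <;> simp

theorem absCoef_parabola_neg_one_zero_one :
    absCoef (parabola '' Set.Icc (-1) 1) (parabola ∘ ![-1, 0, 1]) = 11 / 8 :=
  le_antisymm (absCoef_le (by norm_num) parabola_subset_scaledSimplex_eleven_eighths)
    (le_absCoef ⟨_, by norm_num, parabola_subset_scaledSimplex_eleven_eighths⟩
      fun _ hσ ↦ eleven_eighths_le_of_subset strictMono_neg_one_zero_one (by simp)
        (by simp) (zero_le_one.trans hσ))

theorem affineIndependent_parabola_neg_one_zero_one :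
    AffineIndependent ℝ (parabola ∘ ![-1, 0, 1]) := by
  rw [affineIndependent_iff_of_fintype]
  intro w hw h0
  rw [weightedVSub_eq_linear_combination _ hw] at h0
  simp [Fin.sum_univ_three, parabola] at h0
  obtain ⟨h1, h2⟩ := h0
  rw [Fin.sum_univ_three] at hw
  intro i
  fin_cases i <;> simp <;> linarith

end Parabola

theorem minimal_absCoef_parabola :
    sInf {t : ℝ | ∃ v : Fin 3 → (Fin 2 → ℝ),
        (∀ j, v j ∈ (fun x : ℝ => ![x, x^2]) '' Set.Icc (-1) 1) ∧ AffineIndependent ℝ v ∧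
        t = absCoef ((fun x : ℝ => ![x, x^2]) '' Set.Icc (-1) 1) v} = 11/8 := by
  change sInf {t : ℝ | ∃ v : Fin 3 → (Fin 2 → ℝ), (∀ j, v j ∈ parabola '' Set.Icc (-1) 1) ∧
    AffineIndependent ℝ v ∧ t = absCoef (parabola '' Set.Icc (-1) 1) v} = 11 / 8
  refine IsLeast.csInf_eq ⟨⟨_, fun j ↦ ⟨_, ?_, rfl⟩, affineIndependent_parabola_neg_one_zero_one,
    absCoef_parabola_neg_one_zero_one.symm⟩, ?_⟩
  · fin_cases j <;> norm_num
  rintro _ ⟨v, hv, hind, rfl⟩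
  choose τ hτ hτv using hv
  obtain rfl : v = parabola ∘ τ := funext fun j ↦ (hτv j).symm
  set e := Tuple.sort τ
  have hsorted : StrictMono (τ ∘ e) := (Tuple.monotone_sort τ).strictMono_of_injective
    ((hind.injective.of_comp).comp e.injective)
  rw [← absCoef_comp_perm _ _ e]
  refine le_absCoef (exists_subset_scaledSimplex (isCompact_Icc.image continuous_parabola)
    (hind.comp_embedding e.toEmbedding))
    fun σ hσ ↦ eleven_eighths_le_of_subset hsorted (hτ _).1 (hτ _).2 (zero_le_one.trans hσ)
end

section
/- For cubic interpolation on [−1,1] at the four Chebyshev nodes ±√(2+√2)/2, ±√(2−√2)/2 (the zeros of 8x⁴ − 8x² + 1), the norm of the interpolation projector P : C[−1,1] → Π_3(R^1) equals √(2+√2). -/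
/-! The nodes are `±a, ±b` with `a = cos (π/8)`, `b = sin (π/8)`, which are characterised by
`a ^ 2 + b ^ 2 = 1` and `2 a (a - b) = 1`. The Lebesgue function is even, and on each of `[0, b]`,
`[b, a]`, `[a, 1]` it is an explicit cubic divided by a constant. On `[0, b]` it is at most
`1 / (a ^ 2 - b ^ 2) = √2`, on `[b, a]` a cubic estimate keeps it below `2 a`, and on `[a, 1]` it
increases to its value `1 / (a - b) = 2 a` at `1`. -/

theorem lag_eq_prod_succAbove {n : ℕ} (c : Fin (n + 1) → ℝ) (j : Fin (n + 1)) (x : ℝ) :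
    lag c j x = ∏ i : Fin n, (x - c (j.succAbove i)) / (c j - c (j.succAbove i)) := by
  rw [lag, ← Finset.compl_singleton, ← Fin.image_succAbove_univ,
    Finset.prod_image fun _ _ _ _ h => Fin.succAbove_right_injective h]

theorem abs_sub_add_abs_add (x : ℝ) {c : ℝ} (hc : 0 ≤ c) : |x - c| + |x + c| = 2 * max |x| c := by
  rcases max_cases |x| c with ⟨h, _⟩ | ⟨h, _⟩ <;> rw [h] <;>
    rcases abs_cases x with ⟨_, _⟩ | ⟨_, _⟩ <;> rcases abs_cases (x - c) with ⟨_, _⟩ | ⟨_, _⟩ <;>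
    rcases abs_cases (x + c) with ⟨_, _⟩ | ⟨_, _⟩ <;> linarith

theorem mul_sq_sub_sq_le_one_sub_sq {c t : ℝ} (hct : c ^ 2 ≤ t ^ 2) (ht₀ : -1 ≤ t) (ht₁ : t ≤ 1) :
    t * (t ^ 2 - c ^ 2) ≤ 1 - c ^ 2 := by
  nlinarith [mul_nonneg (sub_nonneg.2 ht₁) (add_nonneg (sub_nonneg.2 hct) (by linarith : 0 ≤ 1 + t))]

/-- The Lebesgue function of the nodes `±a, ±b`, as a function of `t = |x|`. -/
noncomputable def symmLebesgue (a b t : ℝ) : ℝ :=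
  (|t ^ 2 - b ^ 2| * max t a / a + |t ^ 2 - a ^ 2| * max t b / b) / (a ^ 2 - b ^ 2)

section SymmetricNodes

variable {a b : ℝ}

theorem lag_symm_four (hb : 0 < b) (hba : b < a) (x : ℝ) :
    lag ![-a, -b, b, a] 0 x = -((x - a) * (x ^ 2 - b ^ 2)) / (2 * a * (a ^ 2 - b ^ 2)) ∧
    lag ![-a, -b, b, a] 1 x = (x - b) * (x ^ 2 - a ^ 2) / (2 * b * (a ^ 2 - b ^ 2)) ∧
    lag ![-a, -b, b, a] 2 x = -((x + b) * (x ^ 2 - a ^ 2)) / (2 * b * (a ^ 2 - b ^ 2)) ∧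
    lag ![-a, -b, b, a] 3 x = (x + a) * (x ^ 2 - b ^ 2) / (2 * a * (a ^ 2 - b ^ 2)) := by
  have hD : a ^ 2 - b ^ 2 ≠ 0 := by nlinarith
  simp only [lag_eq_prod_succAbove, Fin.prod_univ_three]
  refine ⟨?_, ?_, ?_, ?_⟩ <;> simp +decide only [Fin.succAbove, Fin.isValue, Fin.castSucc_zero,
      Fin.castSucc_one, Fin.succ_zero_eq_one, Fin.succ_one_eq_two, Fin.reduceSucc, Fin.reduceCastSucc,
      Matrix.cons_val, Matrix.cons_val_zero, Matrix.cons_val_one, sub_neg_eq_add, ↓reduceIte] <;>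
    rw [div_mul_div_comm, div_mul_div_comm, div_eq_div_iff
      (by apply_rules [mul_ne_zero] <;> linarith) (by apply_rules [mul_ne_zero] <;> linarith)] <;>
    ring

theorem sum_abs_lag_symm_four (hb : 0 < b) (hba : b < a) (x : ℝ) :
    ∑ j, |lag ![-a, -b, b, a] j x| = symmLebesgue a b |x| := by
  have ha : 0 < a := hb.trans hba
  have hD : 0 < a ^ 2 - b ^ 2 := by nlinarith
  obtain ⟨h0, h1, h2, h3⟩ := lag_symm_four hb hba x
  have hmax (c : ℝ) (hc : 0 ≤ c) : max |x| c = (|x - c| + |x + c|) / 2 := by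
    rw [abs_sub_add_abs_add x hc]; ring
  rw [Fin.sum_univ_four, h0, h1, h2, h3, symmLebesgue, sq_abs, hmax a ha.le, hmax b hb.le]
  simp only [abs_div, abs_mul, abs_neg, abs_of_pos hD, abs_of_pos ha, abs_of_pos hb, abs_two]
  field_simp
  ring

theorem mul_sq_sub_add_mul_sq_sub_le (hb : 0 < b) (hba : b < a) (hsq : a ^ 2 + b ^ 2 = 1)
    (hab : 2 * a * (a - b) = 1) {t : ℝ} (hbt : b ≤ t) (hta : t ≤ a) :
    b * (t ^ 2 - b ^ 2) + t * (a ^ 2 - t ^ 2) ≤ b * (a + b) := by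
  -- `b ^ 2` is the smaller root of `8 u ^ 2 - 8 u + 1`; the left side peaks at about `0.387`
  -- while `b (a + b) = 1 / 2`, so crude enclosures of `a` and `b` suffice.
  have hb2 : b ^ 2 < 1 / 2 := by nlinarith
  have hquart : 8 * b ^ 4 - 8 * b ^ 2 + 1 = 0 := by
    have : 2 * a * b = 1 - 2 * b ^ 2 := by linear_combination 2 * hsq - hab
    nlinarith
  have hbl : 0.38 ≤ b := by nlinarith
  have hbu : b ≤ 0.39 := by nlinarith
  have hal : 0.92 ≤ a := by nlinarith
  have hau : a ≤ 0.93 := by nlinarith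
  nlinarith [mul_nonneg (by linarith : (0:ℝ) ≤ t + 1) (sq_nonneg (t - 0.68)),
    mul_nonneg (sub_nonneg.2 hbt) (sub_nonneg.2 hta)]

theorem symmLebesgue_of_le (hb : 0 < b) (hba : b < a) {t : ℝ} (hat : a ≤ t) :
    symmLebesgue a b t = (t * (t ^ 2 - b ^ 2) / a + t * (t ^ 2 - a ^ 2) / b) / (a ^ 2 - b ^ 2) := by
  rw [symmLebesgue, max_eq_left hat, max_eq_left (hba.le.trans hat),
    abs_of_nonneg (by nlinarith), abs_of_nonneg (by nlinarith)]
  ring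

theorem symmLebesgue_one (hb : 0 < b) (hba : b < a) (hsq : a ^ 2 + b ^ 2 = 1)
    (hab : 2 * a * (a - b) = 1) : symmLebesgue a b 1 = 2 * a := by
  have ha : 0 < a := hb.trans hba
  have hD : 0 < a ^ 2 - b ^ 2 := by nlinarith
  rw [symmLebesgue_of_le hb hba (by nlinarith), one_pow, one_mul, one_mul,
    show 1 - b ^ 2 = a ^ 2 by linarith, show 1 - a ^ 2 = b ^ 2 by linarith, div_eq_iff hD.ne']
  field_simp
  linear_combination -(a + b) * hab

theorem symmLebesgue_le (hb : 0 < b) (hba : b < a) (hsq : a ^ 2 + b ^ 2 = 1)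
    (hab : 2 * a * (a - b) = 1) {t : ℝ} (ht₀ : 0 ≤ t) (ht₁ : t ≤ 1) :
    symmLebesgue a b t ≤ 2 * a := by
  have ha : 0 < a := hb.trans hba
  have hD : 0 < a ^ 2 - b ^ 2 := by nlinarith
  rcases le_total t b with htb | hbt
  · rw [symmLebesgue, max_eq_right (htb.trans hba.le), max_eq_right htb,
      abs_of_nonpos (by nlinarith), abs_of_nonpos (by nlinarith), div_le_iff₀ hD]
    field_simp
    nlinarith
  rcases le_total t a with hta | hat
  · rw [symmLebesgue, max_eq_right hta, max_eq_left hbt,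
      abs_of_nonneg (by nlinarith), abs_of_nonpos (by nlinarith), div_le_iff₀ hD]
    have := mul_sq_sub_add_mul_sq_sub_le hb hba hsq hab hbt hta
    field_simp
    nlinarith
  · rw [← symmLebesgue_one hb hba hsq hab, symmLebesgue_of_le hb hba hat,
      symmLebesgue_of_le hb hba (hat.trans ht₁), one_mul, one_mul, one_pow]
    gcongr <;> apply mul_sq_sub_sq_le_one_sub_sq <;> nlinarith

theorem projNorm_symm_four (hb : 0 < b) (hba : b < a) (hsq : a ^ 2 + b ^ 2 = 1)
    (hab : 2 * a * (a - b) = 1) : projNorm ![-a, -b, b, a] = 2 * a := by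
  refine IsGreatest.csSup_eq ⟨⟨1, ⟨by norm_num, le_rfl⟩, ?_⟩, ?_⟩
  · rw [sum_abs_lag_symm_four hb hba, abs_one, symmLebesgue_one hb hba hsq hab]
  · rintro _ ⟨x, hx, rfl⟩
    rw [sum_abs_lag_symm_four hb hba]
    exact symmLebesgue_le hb hba hsq hab (abs_nonneg x) (abs_le.2 hx)

end SymmetricNodes

theorem cubic_chebyshev_projNorm :
    projNorm ![-(Real.sqrt (2 + Real.sqrt 2))/2, -(Real.sqrt (2 - Real.sqrt 2))/2,
        (Real.sqrt (2 - Real.sqrt 2))/2, (Real.sqrt (2 + Real.sqrt 2))/2] =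
      Real.sqrt (2 + Real.sqrt 2) := by
  have h2 : √2 ^ 2 = 2 := Real.sq_sqrt zero_le_two
  have h2lt : √2 < 2 := by nlinarith [Real.sqrt_nonneg 2]
  have hplus : √(2 + √2) ^ 2 = 2 + √2 := Real.sq_sqrt (by positivity)
  have hminus : √(2 - √2) ^ 2 = 2 - √2 := Real.sq_sqrt (by linarith)
  have hprod : √(2 + √2) * √(2 - √2) = √2 := by
    rw [← Real.sqrt_mul (by positivity)]
    congr 1
    linear_combination -h2
  have hb : 0 < √(2 - √2) / 2 := half_pos (Real.sqrt_pos.2 (sub_pos.2 h2lt))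
  have hba : √(2 - √2) / 2 < √(2 + √2) / 2 := by
    gcongr
    linarith [Real.sqrt_pos.2 two_pos]
  simp only [neg_div]
  rw [projNorm_symm_four hb hba (by linear_combination (hplus + hminus) / 4)
    (by linear_combination hplus / 2 - hprod / 2)]
  ring
end

section
/- For quadratic interpolation on [−1,1] at the three Chebyshev nodes −√3/2, 0, √3/2 (the zeros of 4x³ − 3x), the norm of the interpolation projector P : C[−1,1] → Π_2(R^1) equals 5/3. -/
open Finset Real

noncomputable def lebesgueFun {k : ℕ} (c : Fin k → ℝ) (x : ℝ) : ℝ := ∑ j, |lag c j x|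

theorem projNorm_eq_of_forall_le_of_eq {k : ℕ} (c : Fin k → ℝ) {x₀ M : ℝ}
    (hx₀ : x₀ ∈ Set.Icc (-1 : ℝ) 1) (h₀ : lebesgueFun c x₀ = M)
    (hle : ∀ x ∈ Set.Icc (-1 : ℝ) 1, lebesgueFun c x ≤ M) : projNorm c = M := by
  refine IsGreatest.csSup_eq ⟨⟨x₀, hx₀, h₀.symm⟩, ?_⟩
  rintro _ ⟨x, hx, rfl⟩
  exact hle x hx

section ThreeNodes

variable (a b c x : ℝ)

theorem lag_three_zero : lag ![a, b, c] 0 x = (x - b) * (x - c) / ((a - b) * (a - c)) := by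
  simp [lag, show univ.erase (0 : Fin 3) = {1, 2} from rfl]

theorem lag_three_one : lag ![a, b, c] 1 x = (x - a) * (x - c) / ((b - a) * (b - c)) := by
  simp [lag, show univ.erase (1 : Fin 3) = {0, 2} from rfl]

theorem lag_three_two : lag ![a, b, c] 2 x = (x - a) * (x - b) / ((c - a) * (c - b)) := by
  simp [lag, show univ.erase (2 : Fin 3) = {0, 1} from rfl]

theorem lebesgueFun_three : lebesgueFun ![a, b, c] x =
    |lag ![a, b, c] 0 x| + |lag ![a, b, c] 1 x| + |lag ![a, b, c] 2 x| :=
  Fin.sum_univ_three _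

end ThreeNodes

noncomputable def chebyshevNodes : Fin 3 → ℝ := ![-√3 / 2, 0, √3 / 2]

section Chebyshev

variable (x : ℝ)

theorem sq_sqrt_three : √3 ^ 2 = 3 := sq_sqrt (by norm_num)

theorem lag_chebyshevNodes_zero : lag chebyshevNodes 0 x = (2 * x ^ 2 - √3 * x) / 3 := by
  rw [chebyshevNodes, lag_three_zero,
    show (-√3 / 2 - 0) * (-√3 / 2 - √3 / 2) = 3 / 2 by linear_combination sq_sqrt_three / 2]
  ring

theorem lag_chebyshevNodes_one : lag chebyshevNodes 1 x = 1 - 4 * x ^ 2 / 3 := by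
  rw [chebyshevNodes, lag_three_one,
    show (0 - -√3 / 2) * (0 - √3 / 2) = -3 / 4 by linear_combination -sq_sqrt_three / 4]
  linear_combination sq_sqrt_three / 3

theorem lag_chebyshevNodes_two : lag chebyshevNodes 2 x = (2 * x ^ 2 + √3 * x) / 3 := by
  rw [chebyshevNodes, lag_three_two,
    show (√3 / 2 - -√3 / 2) * (√3 / 2 - 0) = 3 / 2 by linear_combination sq_sqrt_three / 2]
  ring

theorem lebesgueFun_chebyshevNodes : lebesgueFun chebyshevNodes x =
    |(2 * x ^ 2 - √3 * x) / 3| + |1 - 4 * x ^ 2 / 3| + |(2 * x ^ 2 + √3 * x) / 3| := by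
  rw [chebyshevNodes, lebesgueFun_three, ← chebyshevNodes, lag_chebyshevNodes_zero,
    lag_chebyshevNodes_one, lag_chebyshevNodes_two]

theorem lebesgueFun_chebyshevNodes_neg :
    lebesgueFun chebyshevNodes (-x) = lebesgueFun chebyshevNodes x := by
  simp only [lebesgueFun_chebyshevNodes, neg_sq, mul_neg, sub_neg_eq_add, ← sub_eq_add_neg]
  ring

theorem lebesgueFun_chebyshevNodes_le_of_nonneg (hx₀ : 0 ≤ x) (hx₁ : x ≤ 1) :
    lebesgueFun chebyshevNodes x ≤ 5 / 3 := by
  have hs := sq_sqrt_three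
  have hs₀ : 0 ≤ √3 := sqrt_nonneg 3
  rw [lebesgueFun_chebyshevNodes, abs_of_nonneg (a := (2 * x ^ 2 + √3 * x) / 3) (by positivity)]
  rcases le_total (2 * x) √3 with hx | hx
  · rw [abs_of_nonpos (by nlinarith), abs_of_nonneg (by nlinarith)]
    nlinarith [sq_nonneg (4 * x - √3)]
  · rw [abs_of_nonneg (by nlinarith), abs_of_nonpos (by nlinarith)]
    nlinarith

theorem lebesgueFun_chebyshevNodes_le (hx : x ∈ Set.Icc (-1 : ℝ) 1) :
    lebesgueFun chebyshevNodes x ≤ 5 / 3 := by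
  rcases le_total 0 x with h | h
  · exact lebesgueFun_chebyshevNodes_le_of_nonneg x h hx.2
  · rw [← lebesgueFun_chebyshevNodes_neg]
    exact lebesgueFun_chebyshevNodes_le_of_nonneg (-x) (by linarith) (by linarith [hx.1])

theorem lebesgueFun_chebyshevNodes_one : lebesgueFun chebyshevNodes 1 = 5 / 3 := by
  have hs₂ : √3 ≤ 2 := by nlinarith [sq_sqrt_three, sqrt_nonneg 3]
  rw [lebesgueFun_chebyshevNodes, abs_of_nonneg (by linarith), abs_of_nonpos (by norm_num),
    abs_of_nonneg (by positivity)]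
  ring

end Chebyshev

theorem quadratic_chebyshev_projNorm :
    projNorm ![-(Real.sqrt 3)/2, 0, (Real.sqrt 3)/2] = 5/3 :=
  projNorm_eq_of_forall_le_of_eq chebyshevNodes (by norm_num) lebesgueFun_chebyshevNodes_one
    lebesgueFun_chebyshevNodes_le
end

section
/- Let Ω ⊂ R^n be compact, Π = span(φ_1,...,φ_d) with φ_1 ≡ 1, φ_2 = x_1,...,φ_{n+1} = x_n monomials, and T(x) = (φ_2(x),...,φ_d(x)). Let P : C(Ω) → Π be the interpolation projector with admissible nodes x^(1),...,x^(d) ∈ Ω, and let P̄ : C(T(Ω)) → Π_1(R^{d−1}) be the linear interpolation projector with nodes y^(j) = T(x^(j)) (assumed affinely independent). Then ‖P̄‖_{T(Ω)} = ‖P‖_Ω. -/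
/-!
Composition with `T` maps affine functions on `ℝᵐ` into `Π = span φ`, because `φ 0 = 1` and
the coordinates of `T` are `φ 1, …, φ m`. So `μⱼ ∘ T ∈ Π` and it takes the same values as `λⱼ`
at the nodes; an admissible node set is unisolvent for `Π`, hence `μⱼ ∘ T = λⱼ`. The two
suprema then range over the same set of values.
-/

open Submodule

theorem AffineMap.comp_succ_mem_span_of_zero_eq_one {R X : Type*} [CommRing R] {m : ℕ}
    (φ : Fin (m + 1) → X → R) (h1 : ∀ x, φ 0 x = 1) (f : (Fin m → R) →ᵃ[R] R) :
    (fun x => f fun i => φ i.succ x) ∈ span R (Set.range φ) := by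
  refine (mem_span_range_iff_exists_fun R).mpr
    ⟨Fin.cons (f 0) fun i => f.linear fun j => if i = j then 1 else 0, funext fun x => ?_⟩
  have hf : f (fun i => φ i.succ x) = f.linear (fun i => φ i.succ x) + f 0 :=
    congrFun f.decomp _
  rw [hf, LinearMap.pi_apply_eq_sum_univ f.linear]
  simp only [Finset.sum_apply, Pi.smul_apply, Fin.sum_univ_succ, Fin.cons_zero, Fin.cons_succ,
    h1, smul_eq_mul, mul_one]
  rw [add_comm]
  exact congrArg (· + f 0) (Finset.sum_congr rfl fun i _ => mul_comm _ _)

theorem eq_of_mem_span_of_eq_at_nodes {R X ι : Type*} [CommRing R] [IsDomain R] [Fintype ι]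
    [DecidableEq ι] {φ : ι → X → R} {nodes : ι → X}
    (hadm : (Matrix.of fun i j => φ i (nodes j)).det ≠ 0) {f g : X → R}
    (hf : f ∈ span R (Set.range φ)) (hg : g ∈ span R (Set.range φ))
    (hfg : ∀ j, f (nodes j) = g (nodes j)) : f = g := by
  obtain ⟨c, hc⟩ := (mem_span_range_iff_exists_fun R).mp (sub_mem hf hg)
  have hc0 : c = 0 := Matrix.eq_zero_of_vecMul_eq_zero hadm <| funext fun j => by
    simpa [Matrix.vecMul, dotProduct, hfg j] using congrFun hc (nodes j)
  rw [← sub_eq_zero, ← hc, hc0]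
  simp

theorem linear_proj_norm_eq_poly_proj_norm {n m : ℕ}
    (Ω : Set (Fin n → ℝ))
    (φ : Fin (m+1) → ((Fin n → ℝ) → ℝ))
    (h1 : ∀ x, φ 0 x = 1)
    (nodes : Fin (m+1) → (Fin n → ℝ))
    (hadm : (Matrix.of fun i j => φ i (nodes j)).det ≠ 0)
    (lam : Fin (m+1) → ((Fin n → ℝ) → ℝ))
    (hspan : ∀ j, lam j ∈ Submodule.span ℝ (Set.range φ))
    (hdelta : ∀ j k, lam j (nodes k) = if j = k then 1 else 0)
    (T : (Fin n → ℝ) → (Fin m → ℝ)) (hT : ∀ x i, T x i = φ i.succ x)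
    (mu : Fin (m+1) → ((Fin m → ℝ) →ᵃ[ℝ] ℝ))
    (hmu : ∀ j k, mu j (T (nodes k)) = if j = k then 1 else 0) :
    sSup {s : ℝ | ∃ y ∈ T '' Ω, s = ∑ j, |mu j y|} =
      sSup {s : ℝ | ∃ x ∈ Ω, s = ∑ j, |lam j x|} := by
  obtain rfl : T = fun x i => φ i.succ x := funext fun x => funext (hT x)
  have hmu_lam : ∀ j x, mu j (fun i => φ i.succ x) = lam j x := fun j =>
    congrFun <| eq_of_mem_span_of_eq_at_nodes hadm
      ((mu j).comp_succ_mem_span_of_zero_eq_one φ h1) (hspan j) fun k => by rw [hmu, hdelta]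
  simp only [Set.exists_mem_image, hmu_lam]
end
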